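/- arXiv:math/0503501 — 6 statements merged into one kernel-verified Lean document; each statement's English description precedes it below -/
import Mathlib

section
/- Let (P, ≤) be a poset and ≤' a localization of ≤, i.e., a preorder on P such that (i) x ≤ y implies x ≤' y, and (ii) x ≤' y implies there exists w with w ≤' y and y ≤' w and x ≤ w. Then the relation on the quotient P/~' (where x ~' y iff x ≤' y and y ≤' x) defined by [x] ≤ [y] iff there exist u ∈ [x], v ∈ [y] with u ≤ v, is a partial order, and it coincides with the partial order induced by ≤'. -/
/-- The setoid on `P` induced by a preorder `le'`: `x ~ y` iff `le' x y` and `le' y x`. -/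
def locSetoid {P : Type*} (le' : P → P → Prop) (refl' : ∀ x, le' x x)
    (trans' : ∀ {x y z}, le' x y → le' y z → le' x z) : Setoid P where
  r x y := le' x y ∧ le' y x
  iseqv :=
    ⟨fun x => ⟨refl' x, refl' x⟩, fun h => ⟨h.2, h.1⟩,
      fun h1 h2 => ⟨trans' h1.1 h2.1, trans' h2.2 h1.2⟩⟩

section LocQuotient

variable {P : Type*} (le' : P → P → Prop) (refl' : ∀ x, le' x x)
  (trans' : ∀ {x y z}, le' x y → le' y z → le' x z)

theorem le'_congr {a b a' b' : P} (ha : (locSetoid le' refl' @trans').r a a')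
    (hb : (locSetoid le' refl' @trans').r b b') : le' a b = le' a' b' :=
  propext ⟨fun h => trans' ha.2 (trans' h hb.1), fun h => trans' ha.1 (trans' h hb.2)⟩

abbrev locQuotientPartialOrder : PartialOrder (Quotient (locSetoid le' refl' @trans')) where
  le := Quotient.lift₂ le' fun _ _ _ _ => le'_congr le' refl' trans'
  le_refl q := Quotient.inductionOn q refl'
  le_trans a b c := Quotient.inductionOn₃ a b c fun _ _ _ => trans'
  le_antisymm a b := Quotient.inductionOn₂ a b fun _ _ hxy hyx => Quotient.sound ⟨hxy, hyx⟩

theorem locQuotientPartialOrder_le_mk (x y : P) :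
    (locQuotientPartialOrder le' refl' trans').le ⟦x⟧ ⟦y⟧ ↔ le' x y :=
  Iff.rfl

end LocQuotient

theorem le'_iff_exists_equiv_le {P : Type*} [LE P] {le' : P → P → Prop}
    (refl' : ∀ x, le' x x) (trans' : ∀ {x y z}, le' x y → le' y z → le' x z)
    (h1 : ∀ x y : P, x ≤ y → le' x y)
    (h2 : ∀ x y : P, le' x y → ∃ w, le' w y ∧ le' y w ∧ x ≤ w) (x y : P) :
    le' x y ↔ ∃ u v : P, (le' u x ∧ le' x u) ∧ (le' v y ∧ le' y v) ∧ u ≤ v := by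
  constructor
  · intro hxy
    obtain ⟨w, hwy, hyw, hxw⟩ := h2 x y hxy
    exact ⟨x, w, ⟨refl' x, refl' x⟩, ⟨hwy, hyw⟩, hxw⟩
  · rintro ⟨u, v, ⟨-, hxu⟩, ⟨hvy, -⟩, huv⟩
    exact trans' hxu (trans' (h1 u v huv) hvy)

/-- Let `(P, ≤)` be a poset and `≤'` a localization of `≤`, i.e. a preorder such that
(i) `x ≤ y → x ≤' y`, and (ii) `x ≤' y` implies there is `w` with `w ≤' y`, `y ≤' w`
and `x ≤ w`.  Then the relation on the quotient `P/~'` defined by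
`[x] ≤ [y] ↔ ∃ u ∈ [x], v ∈ [y], u ≤ v` is a partial order, and it coincides with the
partial order induced by `≤'`. -/
theorem localization_quotient_partialOrder {P : Type*} [PartialOrder P]
    (le' : P → P → Prop) (refl' : ∀ x, le' x x)
    (trans' : ∀ {x y z}, le' x y → le' y z → le' x z)
    (h1 : ∀ x y : P, x ≤ y → le' x y)
    (h2 : ∀ x y : P, le' x y → ∃ w, le' w y ∧ le' y w ∧ x ≤ w) :
    ∃ po : PartialOrder (Quotient (locSetoid le' refl' @trans')),
      (∀ x y : P, po.le ⟦x⟧ ⟦y⟧ ↔ ∃ u v : P,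
        (le' u x ∧ le' x u) ∧ (le' v y ∧ le' y v) ∧ u ≤ v) ∧
      (∀ x y : P, po.le ⟦x⟧ ⟦y⟧ ↔ le' x y) :=
  ⟨locQuotientPartialOrder le' refl' trans',
    fun x y => (locQuotientPartialOrder_le_mk le' refl' trans' x y).trans
      (le'_iff_exists_equiv_le refl' trans' h1 h2 x y),
    locQuotientPartialOrder_le_mk le' refl' trans'⟩
end

section
/- Let P be a preordered set and E a presheaf on P (with its up-set topology) with values in k-vector spaces defined by E(U(x)) = E_x for a representation E of P and E(U) = the inverse limit of E(U(x)) over x ∈ U for general open U. Then E is a sheaf. -/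
/-- Let `P` be a preordered set with the up-set topology (opens are the upper sets), `k` a
field, and let a representation of `P` be given by vector spaces `V x` and compatible
transition maps `f`.  The induced presheaf, whose sections over an open `U` form the inverse
limit of the `V x` over `x ∈ U` (i.e. compatible families), is a sheaf: for any open cover
`U = ⋃ Uᵢ` by upper sets and any compatible sections `sᵢ` over the `Uᵢ` which agree on
overlaps, there is a unique section over `U` restricting to the `sᵢ`. -/
theorem presheaf_on_preorder_is_sheaf (P : Type*) [Preorder P] (k : Type*) [Field k]
    (V : P → Type*) [∀ x, AddCommGroup (V x)] [∀ x, Module k (V x)]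
    (f : ∀ {x y : P}, x ≤ y → (V x →ₗ[k] V y))
    (f_id : ∀ x : P, f (le_refl x) = LinearMap.id)
    (f_comp : ∀ {x y z : P} (h1 : x ≤ y) (h2 : y ≤ z) (v : V x),
      f h2 (f h1 v) = f (h1.trans h2) v)
    {ι : Type*} (U : Set P) (Ui : ι → Set P)
    (hU : IsUpperSet U) (hUi : ∀ i, IsUpperSet (Ui i))
    (hsub : ∀ i, Ui i ⊆ U) (hcover : U = ⋃ i, Ui i)
    (s : ∀ i, ∀ x ∈ Ui i, V x)
    (hcompat : ∀ i, ∀ x, ∀ hx : x ∈ Ui i, ∀ y, ∀ hy : y ∈ Ui i, ∀ h : x ≤ y,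
      f h (s i x hx) = s i y hy)
    (hagree : ∀ i j, ∀ x, ∀ hxi : x ∈ Ui i, ∀ hxj : x ∈ Ui j, s i x hxi = s j x hxj) :
    ∃! t : ∀ x ∈ U, V x,
      (∀ x, ∀ hx : x ∈ U, ∀ y, ∀ hy : y ∈ U, ∀ h : x ≤ y, f h (t x hx) = t y hy) ∧
      (∀ i, ∀ x, ∀ hxi : x ∈ Ui i, ∀ hx : x ∈ U, t x hx = s i x hxi) := by

  have hmem : ∀ x ∈ U, ∃ i, x ∈ Ui i := by
    intro x hx
    have := hcover ▸ hx
    simpa using this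
  choose ind hind using hmem
  refine ⟨fun x hx => s (ind x hx) x (hind x hx), ⟨?_, ?_⟩, ?_⟩
  · intro x hx y hy h
    have hyi : y ∈ Ui (ind x hx) := hUi _ h (hind x hx)
    rw [hcompat (ind x hx) x (hind x hx) y hyi h]
    exact hagree _ _ _ hyi (hind y hy)
  · intro i x hxi hx
    exact hagree _ _ _ (hind x hx) hxi
  · intro t ⟨ht1, ht2⟩
    funext x hx
    exact ht2 (ind x hx) x (hind x hx) hx
end

section
/- Let P be a preordered set, k a field, and for x ∈ P let F^x be the representation of P sending y to k if x ≤ y and to 0 otherwise, with identity maps on relations y ≤ z whenever x ≤ y and zero maps otherwise. Then F^x is a projective object in the abelian category of k-linear representations of P. -/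
/-- The free representation `F^x` of a preordered set `P` at `x`: its value at `y` is
`PLift (x ≤ y) → k`, which is `k` when `x ≤ y` and `0` otherwise. -/
abbrev FxObj (k : Type*) {P : Type*} [Preorder P] (x y : P) : Type _ := PLift (x ≤ y) → k

open Classical

/-- The transition map of the free representation `F^x` along `y ≤ z`: the identity of `k`
when `x ≤ y`, and the zero map otherwise. -/
noncomputable def FxMap (k : Type*) [Field k] {P : Type*} [Preorder P] (x : P) {y z : P}
    (h : y ≤ z) : FxObj k x y →ₗ[k] FxObj k x z :=
  if hxy : x ≤ y then LinearMap.funLeft k k (fun _ => ⟨hxy⟩ : PLift (x ≤ z) → PLift (x ≤ y))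
  else 0

/-- The free representation `F^x` is a projective object in the category of `k`-linear
representations of a preordered set `P`: for any objectwise-surjective morphism `g : E → F`
of representations and any morphism `φ : F^x → F`, there is a lift `ψ : F^x → E` with
`g ∘ ψ = φ`. -/
theorem Fx_projective (k : Type*) [Field k] (P : Type*) [Preorder P] (x : P)
    (E F : P → Type*) [∀ y, AddCommGroup (E y)] [∀ y, Module k (E y)]
    [∀ y, AddCommGroup (F y)] [∀ y, Module k (F y)]
    (eMap : ∀ {y z : P}, y ≤ z → (E y →ₗ[k] E z))
    (fMap : ∀ {y z : P}, y ≤ z → (F y →ₗ[k] F z))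
    (eMap_id : ∀ y, eMap (le_refl y) = LinearMap.id)
    (eMap_comp : ∀ {y z w : P} (h1 : y ≤ z) (h2 : z ≤ w),
      (eMap h2).comp (eMap h1) = eMap (h1.trans h2))
    (fMap_id : ∀ y, fMap (le_refl y) = LinearMap.id)
    (fMap_comp : ∀ {y z w : P} (h1 : y ≤ z) (h2 : z ≤ w),
      (fMap h2).comp (fMap h1) = fMap (h1.trans h2))
    (g : ∀ y, E y →ₗ[k] F y)
    (g_nat : ∀ {y z : P} (h : y ≤ z), (g z).comp (eMap h) = (fMap h).comp (g y))
    (g_surj : ∀ y, Function.Surjective (g y))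
    (φ : ∀ y, FxObj k x y →ₗ[k] F y)
    (φ_nat : ∀ {y z : P} (h : y ≤ z), (φ z).comp (FxMap k x h) = (fMap h).comp (φ y)) :
    ∃ ψ : ∀ y, FxObj k x y →ₗ[k] E y,
      (∀ {y z : P} (h : y ≤ z), (ψ z).comp (FxMap k x h) = (eMap h).comp (ψ y)) ∧
      (∀ y, (g y).comp (ψ y) = φ y) := by

  -- pick a preimage of φ x (constant 1) under g x
  obtain ⟨e, he⟩ := g_surj x (φ x (fun _ => (1 : k)))
  refine ⟨fun y =>
    if hxy : x ≤ y then
      ((LinearMap.proj (⟨hxy⟩ : PLift (x ≤ y)) : (PLift (x ≤ y) → k) →ₗ[k] k).smulRight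
        (eMap hxy e))
    else 0, ?_, ?_⟩
  · intro y z h
    by_cases hxy : x ≤ y
    · have hxz : x ≤ z := hxy.trans h
      refine LinearMap.ext fun f => ?_
      simp only [FxMap, dif_pos hxy, dif_pos hxz, LinearMap.comp_apply,
        LinearMap.funLeft_apply, LinearMap.smulRight_apply, LinearMap.proj_apply,
        LinearMap.map_smul]
      rw [← LinearMap.comp_apply (eMap h) (eMap hxy), eMap_comp]
    · refine LinearMap.ext fun f => ?_
      simp only [FxMap, dif_neg hxy, LinearMap.comp_apply, LinearMap.zero_apply,
        LinearMap.map_zero]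
  · intro y
    by_cases hxy : x ≤ y
    · refine LinearMap.ext fun f => ?_
      simp only [dif_pos hxy, LinearMap.comp_apply, LinearMap.smulRight_apply,
        LinearMap.proj_apply, LinearMap.map_smul]
      rw [← LinearMap.comp_apply (g y) (eMap hxy), g_nat hxy, LinearMap.comp_apply, he,
        ← LinearMap.comp_apply (fMap hxy) (φ x), ← φ_nat hxy]
      have h1 : FxMap k x hxy (fun _ => (1 : k)) = fun _ => (1 : k) := by
        simp only [FxMap, dif_pos (le_refl x)]; rfl
      rw [LinearMap.comp_apply, h1, ← LinearMap.map_smul]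
      congr 1
      funext p
      simp [Subsingleton.elim p ⟨hxy⟩]
    · refine LinearMap.ext fun f => ?_
      have hf : f = 0 := funext fun p => absurd p.down hxy
      simp [dif_neg hxy, hf]
end

section
/- Let P be a finite preordered set and E a k-linear representation of P with all E_x finite dimensional. Then E admits a finite free resolution: there is an exact sequence 0 → F_n → ⋯ → F_0 → E → 0 where each F_i is a finite direct sum of representations of the form F^{x} for x ∈ P. -/
open Classical

/-- The degree-`y` component of a finite direct sum of free representations `⨁_j F^{c j}`:
functions on `{j // c j ≤ y}` with values in `k`. -/
abbrev FreeSumObj (k : Type*) {P : Type*} [Preorder P] {μ : Type*} (c : μ → P) (y : P) :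
    Type _ := {j : μ // c j ≤ y} → k

/-- The transition map of the direct sum of free representations `⨁_j F^{c j}` along
`y ≤ z`: extension by zero of the canonical inclusion `{j // c j ≤ y} ⊆ {j // c j ≤ z}`. -/
noncomputable def FreeSumMap (k : Type*) [Field k] {P : Type*} [Preorder P] {μ : Type*}
    (c : μ → P) {y z : P} (h : y ≤ z) : FreeSumObj k c y →ₗ[k] FreeSumObj k c z where
  toFun f := fun j => if h' : c j.1 ≤ y then f ⟨j.1, h'⟩ else 0
  map_add' f g := by funext j; by_cases h' : c j.1 ≤ y <;> simp [h']
  map_smul' a f := by funext j; by_cases h' : c j.1 ≤ y <;> simp [h']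

/-!
Choose in each `E_x` a complement of `E_{<x}`, at one representative `x` of each class of the
preorder, and map the free representation on bases of these complements onto `E`; by well-founded
induction this cover is surjective. If `E` vanishes at all points with fewer than `m` strict
predecessors, the cover is injective at every `x` with at most `m` of them: the only generators
below such an `x` are the basis vectors of the complement at the representative of `x`. Hence the
`i`-th syzygy vanishes at points with fewer than `i` strict predecessors, so it is zero once
`i ≥ |P|`, and splicing the covers of the successive syzygies gives a finite free resolution.
-/

universe u v w

variable {k : Type u} [Field k] {P : Type v} [Preorder P]

section FreeSum

variable {γ : Type w} (c : γ → P)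

theorem freeSumMap_apply {y z : P} (h : y ≤ z) (g : FreeSumObj k c y) (j : {j // c j ≤ z}) :
    FreeSumMap k c h g j = if h' : c j.1 ≤ y then g ⟨j.1, h'⟩ else 0 := rfl

theorem freeSumMap_refl (y : P) : FreeSumMap k c (le_refl y) = LinearMap.id := by
  ext g j
  simp [freeSumMap_apply, j.2]

theorem freeSumMap_comp {x y z : P} (h₁ : x ≤ y) (h₂ : y ≤ z) :
    (FreeSumMap k c h₂).comp (FreeSumMap k c h₁) = FreeSumMap k c (h₁.trans h₂) := by
  ext g j
  by_cases hx : c j.1 ≤ x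
  · simp [freeSumMap_apply, hx, hx.trans h₁]
  · by_cases hy : c j.1 ≤ y <;> simp [freeSumMap_apply, hx, hy]

theorem freeSumMap_single {y z : P} (h : y ≤ z) (j : {j // c j ≤ y}) (a : k) :
    FreeSumMap k c h (Pi.single j a) = Pi.single ⟨j.1, j.2.trans h⟩ a := by
  ext j'
  by_cases hj : c j'.1 ≤ y
  · simp [freeSumMap_apply, hj, Pi.single_apply, Subtype.ext_iff]
  · have : j'.1 ≠ j.1 := fun e => hj (e ▸ j.2)
    simp [freeSumMap_apply, hj, Subtype.ext_iff, this]

end FreeSum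

structure PreorderRep (k : Type u) [Field k] (P : Type v) [Preorder P] :
    Type (max u v (w + 1)) where
  V : P → Type w
  [addCommGroup : ∀ x, AddCommGroup (V x)]
  [module : ∀ x, Module k (V x)]
  [finiteDimensional : ∀ x, FiniteDimensional k (V x)]
  map : ∀ {x y : P}, x ≤ y → (V x →ₗ[k] V y)
  map_refl : ∀ x, map (le_refl x) = LinearMap.id
  map_comp : ∀ {x y z : P} (h₁ : x ≤ y) (h₂ : y ≤ z), (map h₂).comp (map h₁) = map (h₁.trans h₂)

attribute [instance] PreorderRep.addCommGroup PreorderRep.module PreorderRep.finiteDimensional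

namespace PreorderRep

variable (E : PreorderRep.{u, v, w} k P)

theorem map_map {x y z : P} (h₁ : x ≤ y) (h₂ : y ≤ z) (v : E.V x) :
    E.map h₂ (E.map h₁ v) = E.map (h₁.trans h₂) v := by
  rw [← LinearMap.comp_apply, E.map_comp]

theorem map_injective_of_ge {x y : P} (h : x ≤ y) (h' : y ≤ x) : Function.Injective (E.map h) :=
  Function.LeftInverse.injective (g := E.map h') fun v => by
    rw [map_map, E.map_refl, LinearMap.id_apply]

theorem map_surjective_of_ge {x y : P} (h : x ≤ y) (h' : y ≤ x) :
    Function.Surjective (E.map h) :=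
  Function.RightInverse.surjective (g := E.map h') fun v => by
    rw [map_map, E.map_refl, LinearMap.id_apply]

/-- The subspace `E_{<x}` of `E_x`. -/
noncomputable def below (x : P) : Submodule k (E.V x) :=
  ⨆ z : {z // z < x}, LinearMap.range (E.map z.2.le)

theorem map_below_le {x y : P} (h : x ≤ y) : (E.below x).map (E.map h) ≤ E.below y := by
  rw [below, Submodule.map_iSup]
  refine iSup_le fun z => ?_
  rw [← LinearMap.range_comp, E.map_comp]
  exact le_iSup (fun z : {z // z < y} => LinearMap.range (E.map z.2.le)) ⟨z, z.2.trans_le h⟩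

section Lift

variable {γ : Type*} [Fintype γ] {c : γ → P}

noncomputable def lift (v : ∀ j, E.V (c j)) (y : P) : FreeSumObj k c y →ₗ[k] E.V y :=
  Fintype.linearCombination k fun j : {j // c j ≤ y} => E.map j.2 (v j)

theorem lift_single [DecidableEq γ] (v : ∀ j, E.V (c j)) {y : P} (j : {j // c j ≤ y}) (a : k) :
    E.lift v y (Pi.single j a) = a • E.map j.2 (v j) :=
  Fintype.linearCombination_apply_single k _ j a

theorem lift_single_self [DecidableEq γ] (v : ∀ j, E.V (c j)) (j : γ) (a : k) :
    E.lift v (c j) (Pi.single ⟨j, le_rfl⟩ a) = a • v j := by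
  rw [lift_single, E.map_refl, LinearMap.id_apply]

theorem lift_naturality (v : ∀ j, E.V (c j)) {y z : P} (h : y ≤ z) :
    (E.lift v z).comp (FreeSumMap k c h) = (E.map h).comp (E.lift v y) := by
  refine LinearMap.pi_ext fun j a => ?_
  simp only [LinearMap.comp_apply, freeSumMap_single, lift_single, map_smul, map_map]

theorem lift_surjective [Finite P] (v : ∀ j, E.V (c j))
    (hgen : ∀ x, E.below x ⊔ LinearMap.range (E.lift v x) = ⊤) (y : P) :
    Function.Surjective (E.lift v y) := by
  induction y using WellFoundedLT.induction with
  | _ y ih =>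
    rw [← LinearMap.range_eq_top, ← hgen y, right_eq_sup]
    refine iSup_le fun ⟨z, hz⟩ => ?_
    rintro _ ⟨u, rfl⟩
    obtain ⟨g, rfl⟩ := ih z hz u
    exact ⟨FreeSumMap k c hz.le g, by rw [← LinearMap.comp_apply, lift_naturality]; rfl⟩

end Lift

noncomputable abbrev kerRep {γ : Type} [Fintype γ] {c : γ → P}
    (ε : ∀ y, FreeSumObj k c y →ₗ[k] E.V y)
    (hε : ∀ {y z : P} (h : y ≤ z), (ε z).comp (FreeSumMap k c h) = (E.map h).comp (ε y)) :
    PreorderRep.{u, v, u} k P where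
  V y := LinearMap.ker (ε y)
  map h := (FreeSumMap k c h).restrict fun g hg => by
    rw [LinearMap.mem_ker, ← LinearMap.comp_apply, hε, LinearMap.comp_apply,
      LinearMap.mem_ker.1 hg, map_zero]
  map_refl y := by
    ext g : 1
    exact Subtype.ext (LinearMap.congr_fun (freeSumMap_refl c y) g.1)
  map_comp h₁ h₂ := by
    ext g : 1
    exact Subtype.ext (LinearMap.congr_fun (freeSumMap_comp c h₁ h₂) g.1)

structure FreeResolution where
  length : ℕ
  μ : ℕ → Type
  [fintype : ∀ i, Fintype (μ i)]
  c : ∀ i, μ i → P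
  d : ∀ (i : ℕ) (y : P), FreeSumObj k (c (i + 1)) y →ₗ[k] FreeSumObj k (c i) y
  ε : ∀ y : P, FreeSumObj k (c 0) y →ₗ[k] E.V y
  isEmpty_of_lt : ∀ i, length < i → IsEmpty (μ i)
  d_naturality : ∀ (i : ℕ) {y z : P} (h : y ≤ z),
    (d i z).comp (FreeSumMap k (c (i + 1)) h) = (FreeSumMap k (c i) h).comp (d i y)
  ε_naturality : ∀ {y z : P} (h : y ≤ z),
    (ε z).comp (FreeSumMap k (c 0) h) = (E.map h).comp (ε y)
  ε_surjective : ∀ y, Function.Surjective (ε y)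
  ker_ε : ∀ y, LinearMap.ker (ε y) = LinearMap.range (d 0 y)
  ker_d : ∀ (i : ℕ) (y : P), LinearMap.ker (d i y) = LinearMap.range (d (i + 1) y)

namespace FreeResolution

variable {E}

noncomputable def ofSubsingleton (hE : ∀ y, Subsingleton (E.V y)) : FreeResolution E where
  length := 0
  μ _ := Empty
  c _ := Empty.elim
  d _ _ := 0
  ε _ := 0
  isEmpty_of_lt _ _ := inferInstance
  d_naturality _ _ _ _ := by rw [LinearMap.zero_comp, LinearMap.comp_zero]
  ε_naturality _ := by rw [LinearMap.zero_comp, LinearMap.comp_zero]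
  ε_surjective _ _ := ⟨0, Subsingleton.elim _ _⟩
  ker_ε _ := Subsingleton.elim _ _
  ker_d _ _ := Subsingleton.elim _ _

noncomputable def splice {γ : Type} [Fintype γ] {c : γ → P}
    (ε : ∀ y, FreeSumObj k c y →ₗ[k] E.V y)
    (hε : ∀ {y z : P} (h : y ≤ z), (ε z).comp (FreeSumMap k c h) = (E.map h).comp (ε y))
    (hsurj : ∀ y, Function.Surjective (ε y)) (R : FreeResolution (E.kerRep ε hε)) :
    FreeResolution E where
  length := R.length + 1
  μ | 0 => γ | i + 1 => R.μ i
  fintype | 0 => inferInstance | i + 1 => R.fintype i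
  c | 0 => c | i + 1 => R.c i
  d | 0, y => (LinearMap.ker (ε y)).subtype.comp (R.ε y) | i + 1, y => R.d i y
  ε := ε
  isEmpty_of_lt
    | 0, h => absurd h (Nat.not_lt_zero _)
    | i + 1, h => R.isEmpty_of_lt i (by omega)
  d_naturality := by
    rintro (_ | i) y z h
    · ext g : 1
      exact congrArg Subtype.val (LinearMap.congr_fun (R.ε_naturality h) g)
    · exact R.d_naturality i h
  ε_naturality := hε
  ε_surjective := hsurj
  ker_ε y := by
    change _ = LinearMap.range ((LinearMap.ker (ε y)).subtype.comp (R.ε y))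
    rw [LinearMap.range_comp, LinearMap.range_eq_top.2 (R.ε_surjective y), Submodule.map_top,
      Submodule.range_subtype]
  ker_d := by
    rintro (_ | i) y
    · change LinearMap.ker ((LinearMap.ker (ε y)).subtype.comp (R.ε y)) = _
      rw [LinearMap.ker_comp, Submodule.ker_subtype, Submodule.comap_bot]
      exact R.ker_ε y
    · exact R.ker_d i y

end FreeResolution

end PreorderRep

section

variable [Fintype P]

noncomputable def numLT (x : P) : ℕ := (Finset.univ.filter (· < x)).card

theorem numLT_lt_numLT {x y : P} (h : x < y) : numLT x < numLT y := by
  refine Finset.card_lt_card ⟨fun z hz => ?_, fun hsub => ?_⟩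
  · simp only [Finset.mem_filter, Finset.mem_univ, true_and] at hz ⊢
    exact hz.trans h
  · exact lt_irrefl x (Finset.mem_filter.1 (hsub (by simpa using h))).2

theorem numLT_lt_card (x : P) : numLT x < Fintype.card P :=
  Finset.card_lt_univ_of_notMem (x := x) (by simp)

end

noncomputable def rep (x : P) : P :=
  ofAntisymmetrization (· ≤ ·) (toAntisymmetrization (· ≤ ·) x)

theorem antisymmRel_rep (x : P) : AntisymmRel (· ≤ ·) (rep x) x :=
  Quotient.mk_out (s := AntisymmRel.setoid P (· ≤ ·)) x

theorem rep_eq_rep {x y : P} (h : AntisymmRel (· ≤ ·) x y) : rep x = rep y :=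
  congrArg (ofAntisymmetrization (· ≤ ·)) (Quotient.sound (s := AntisymmRel.setoid P (· ≤ ·)) h)

theorem rep_rep (x : P) : rep (rep x) = rep x :=
  rep_eq_rep (antisymmRel_rep x)

namespace PreorderRep

variable (E : PreorderRep.{u, v, w} k P)

/-- Only the chosen representative of each class carries generators, so that equivalent points
do not contribute redundant ones. -/
noncomputable def freePart (x : P) : Submodule k (E.V x) :=
  if rep x = x then (E.below x).exists_isCompl.choose else ⊥

theorem below_sup_freePart_rep (x : P) : E.below (rep x) ⊔ E.freePart (rep x) = ⊤ := by
  rw [freePart, if_pos (rep_rep x)]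
  exact (E.below _).exists_isCompl.choose_spec.sup_eq_top

variable [Fintype P]

/-- Indexing the points by `Fin (Fintype.card P)` keeps the index type in `Type`. -/
abbrev Gen : Type :=
  Σ i : Fin (Fintype.card P), Fin (Module.finrank k (E.freePart ((Fintype.equivFin P).symm i)))

noncomputable def genPoint (j : E.Gen) : P := (Fintype.equivFin P).symm j.1

noncomputable def genVec (j : E.Gen) : E.V (E.genPoint j) :=
  Module.finBasis k (E.freePart (E.genPoint j)) j.2

noncomputable def cover (y : P) : FreeSumObj k E.genPoint y →ₗ[k] E.V y := E.lift E.genVec y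

theorem cover_naturality {y z : P} (h : y ≤ z) :
    (E.cover z).comp (FreeSumMap k E.genPoint h) = (E.map h).comp (E.cover y) :=
  E.lift_naturality E.genVec h

theorem freePart_le_range_cover (x : P) : E.freePart x ≤ LinearMap.range (E.cover x) := by
  obtain ⟨i, rfl⟩ := (Fintype.equivFin P).symm.surjective x
  rw [← Submodule.map_subtype_top (E.freePart _), ← (Module.finBasis k _).span_eq,
    Submodule.map_span, ← Set.range_comp, Submodule.span_le]
  rintro _ ⟨a, rfl⟩
  exact ⟨Pi.single ⟨⟨i, a⟩, le_rfl⟩ 1, (E.lift_single_self E.genVec ⟨i, a⟩ 1).trans (one_smul k _)⟩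

theorem below_sup_range_cover (x : P) : E.below x ⊔ LinearMap.range (E.cover x) = ⊤ := by
  obtain ⟨hrx, hxr⟩ := antisymmRel_rep x
  rw [eq_top_iff, ← LinearMap.range_eq_top.2 (E.map_surjective_of_ge hrx hxr),
    LinearMap.range_eq_map, ← E.below_sup_freePart_rep x, Submodule.map_sup]
  refine sup_le_sup (E.map_below_le hrx) ?_
  calc (E.freePart (rep x)).map (E.map hrx)
      ≤ (LinearMap.range (E.cover (rep x))).map (E.map hrx) :=
        Submodule.map_mono (E.freePart_le_range_cover _)
    _ ≤ LinearMap.range (E.cover x) := by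
        rw [← LinearMap.range_comp, ← cover_naturality]
        exact LinearMap.range_comp_le_range _ _

theorem cover_surjective (y : P) : Function.Surjective (E.cover y) :=
  E.lift_surjective E.genVec E.below_sup_range_cover y

def VanishesBelow (m : ℕ) : Prop := ∀ z, numLT z < m → Subsingleton (E.V z)

theorem genPoint_eq_rep {m : ℕ} (hE : E.VanishesBelow m) {x : P} (hx : numLT x ≤ m) (j : E.Gen)
    (hj : E.genPoint j ≤ x) : E.genPoint j = rep x := by
  have hpos : 0 < Module.finrank k (E.freePart (E.genPoint j)) := j.2.pos
  have hrep : rep (E.genPoint j) = E.genPoint j := by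
    by_contra h
    rw [freePart, if_neg h, finrank_bot] at hpos
    exact hpos.false
  have hxj : x ≤ E.genPoint j := by
    by_contra hxj
    have := hE _ ((numLT_lt_numLT (lt_of_le_not_ge hj hxj)).trans_le hx)
    exact hpos.ne' Module.finrank_zero_of_subsingleton
  rw [← hrep]
  exact rep_eq_rep ⟨hj, hxj⟩

theorem ker_cover_eq_bot {m : ℕ} (hE : E.VanishesBelow m) {x : P} (hx : numLT x ≤ m) :
    LinearMap.ker (E.cover x) = ⊥ := by
  obtain ⟨i, hi⟩ := (Fintype.equivFin P).symm.surjective (rep x)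
  have hix : AntisymmRel (· ≤ ·) ((Fintype.equivFin P).symm i) x := hi ▸ antisymmRel_rep x
  let φ (a : Fin (Module.finrank k (E.freePart ((Fintype.equivFin P).symm i)))) :
      {j : E.Gen // E.genPoint j ≤ x} := ⟨⟨i, a⟩, hix.le⟩
  have hφ : Function.Surjective φ := by
    rintro ⟨⟨i', a⟩, hj⟩
    obtain rfl : i' = i :=
      (Fintype.equivFin P).symm.injective ((E.genPoint_eq_rep hE hx _ hj).trans hi.symm)
    exact ⟨a, rfl⟩
  have hind : LinearIndependent k
      ((fun j : {j : E.Gen // E.genPoint j ≤ x} => E.map j.2 (E.genVec j)) ∘ φ) :=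
    (Module.finBasis k _).linearIndependent.map' ((E.map hix.le).comp (E.freePart _).subtype)
      (LinearMap.ker_eq_bot.2
        ((E.map_injective_of_ge hix.le hix.ge).comp Subtype.val_injective))
  rw [LinearMap.ker_eq_bot, cover, lift, ← linearIndependent_iff_injective_fintypeLinearCombination]
  exact (linearIndependent_equiv (Equiv.ofBijective φ ⟨hind.injective.of_comp, hφ⟩)).1 hind

noncomputable def syzygy : PreorderRep.{u, v, u} k P := E.kerRep E.cover E.cover_naturality

theorem vanishesBelow_syzygy {m : ℕ} (hE : E.VanishesBelow m) : E.syzygy.VanishesBelow (m + 1) :=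
  fun z hz => by
    change Subsingleton (LinearMap.ker (E.cover z))
    rw [E.ker_cover_eq_bot hE (Nat.lt_succ_iff.1 hz)]
    infer_instance

theorem nonempty_freeResolution_of_vanishesBelow {F : PreorderRep.{u, v, u} k P} {m t : ℕ}
    (ht : Fintype.card P ≤ m + t) (hF : F.VanishesBelow m) : Nonempty (FreeResolution F) := by
  induction t generalizing F m with
  | zero => exact ⟨.ofSubsingleton fun y => hF y ((numLT_lt_card y).trans_le ht)⟩
  | succ t ih =>
    exact ⟨.splice F.cover F.cover_naturality F.cover_surjective
      (ih (m := m + 1) (by omega) (F.vanishesBelow_syzygy hF)).some⟩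

theorem nonempty_freeResolution : Nonempty (FreeResolution E) :=
  ⟨.splice E.cover E.cover_naturality E.cover_surjective
    (nonempty_freeResolution_of_vanishesBelow (F := E.syzygy) (m := 0) (t := Fintype.card P)
      (by omega) fun _ hz => absurd hz (Nat.not_lt_zero _)).some⟩

end PreorderRep

/-- Every `k`-linear representation `E` of a finite preordered set `P`, with all `E_x`
finite dimensional, admits a finite free resolution
`0 → F_n → ⋯ → F_0 → E → 0` where each `F_i` is a finite direct sum of free
representations `F^x`, `x ∈ P`.  (The resolution is encoded by an `ℕ`-indexed chain which
vanishes beyond level `n`.) -/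
theorem finite_free_resolution (k : Type*) [Field k] (P : Type*) [Preorder P] [Fintype P]
    (V : P → Type*) [∀ x, AddCommGroup (V x)] [∀ x, Module k (V x)]
    [∀ x, FiniteDimensional k (V x)]
    (f : ∀ {x y : P}, x ≤ y → (V x →ₗ[k] V y))
    (f_id : ∀ x : P, f (le_refl x) = LinearMap.id)
    (f_comp : ∀ {x y z : P} (h1 : x ≤ y) (h2 : y ≤ z),
      (f h2).comp (f h1) = f (h1.trans h2)) :
    ∃ (n : ℕ) (μ : ℕ → Type) (_ : ∀ i, Fintype (μ i)) (c : ∀ i, μ i → P)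
      (d : ∀ (i : ℕ) (y : P), FreeSumObj k (c (i + 1)) y →ₗ[k] FreeSumObj k (c i) y)
      (ε : ∀ y : P, FreeSumObj k (c 0) y →ₗ[k] V y),
      (∀ i, n < i → IsEmpty (μ i)) ∧
      (∀ (i : ℕ) {y z : P} (h : y ≤ z),
        (d i z).comp (FreeSumMap k (c (i + 1)) h) = (FreeSumMap k (c i) h).comp (d i y)) ∧
      (∀ {y z : P} (h : y ≤ z), (ε z).comp (FreeSumMap k (c 0) h) = (f h).comp (ε y)) ∧
      (∀ y, Function.Surjective (ε y)) ∧
      (∀ y, LinearMap.ker (ε y) = LinearMap.range (d 0 y)) ∧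
      (∀ (i : ℕ) (y : P), LinearMap.ker (d i y) = LinearMap.range (d (i + 1) y)) := by
  obtain ⟨R⟩ := PreorderRep.nonempty_freeResolution
    { V := V, map := f, map_refl := f_id, map_comp := f_comp : PreorderRep k P }
  exact ⟨R.length, R.μ, R.fintype, R.c, R.d, R.ε, R.isEmpty_of_lt, R.d_naturality,
    R.ε_naturality, R.ε_surjective, R.ker_ε, R.ker_d⟩
end

section
/- Let f : P → Q be a contraction of finite preordered sets with hooking h : Q → P, and let F^y denote the free representation of Q at y ∈ Q (value k at z iff y ≤ z). Then the pullback f*F^y is isomorphic to the free representation F^{h(y)} of P. -/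
open Classical

/-- Let `f : P → Q` be a contraction of finite preordered sets with hooking `h : Q → P`,
and `y ∈ Q`.  Then the pullback `f* F^y` of the free representation of `Q` at `y` is
isomorphic, as a representation of `P`, to the free representation `F^{h y}` of `P`:
there is a family of linear isomorphisms commuting with the transition maps. -/
theorem pullback_free_rep_iso (k : Type*) [Field k] {P Q : Type*} [Preorder P] [Preorder Q]
    [Finite P] [Finite Q]
    (f : P → Q) (hmono : Monotone f)
    (hc1 : ∀ x : P, ∃ y : Q, f '' Set.Ici x = Set.Ici y)
    (hc2 : ∀ y : Q, ∃ x : P, f ⁻¹' Set.Ici y = Set.Ici x)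
    (h : Q → P) (hh : ∀ y : Q, f ⁻¹' Set.Ici y = Set.Ici (h y))
    (y : Q) :
    ∃ e : ∀ x : P, FxObj k y (f x) ≃ₗ[k] FxObj k (h y) x,
      ∀ (x x' : P) (hle : x ≤ x') (v : FxObj k y (f x)),
        e x' (FxMap k y (hmono hle) v) = FxMap k (h y) hle (e x v) := by
  have key : ∀ x : P, (y ≤ f x) ↔ (h y ≤ x) := fun x => by
    have := Set.ext_iff.mp (hh y) x
    simpa using this
  refine ⟨fun x => LinearEquiv.funCongrLeft k k
    (Equiv.plift.trans ((Equiv.ofIff (key x)).symm.trans Equiv.plift.symm)), ?_⟩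
  intro x x' hle v
  funext w
  obtain ⟨w⟩ := w
  by_cases hyx : y ≤ f x
  · simp [FxMap, LinearEquiv.funCongrLeft, hyx, (key x).mp hyx]
  · have : ¬ h y ≤ x := fun hx => hyx ((key x).mpr hx)
    simp [FxMap, hyx, this, LinearEquiv.funCongrLeft]
end

section
/- Let E be an equivariant reflexive sheaf on an affine toric variety U_σ (σ full-dimensional) given by full filtrations E^ρ(i) of a finite-dimensional vector space E, with E^σ_m = ⋂_{ρ∈σ(1)} E^ρ(⟨m,n(ρ)⟩). Define A(m) = (min{i : E^σ_m ⊆ E^ρ(i)})_{ρ∈σ(1)} ∈ Z^{σ(1)}. Then for all m, m' ∈ M: E^σ_m ⊆ E^σ_{m'} if and only if A(m) ≤ A(m') componentwise, and E^σ_m = E^σ_{m'} if and only if A(m) = A(m'). -/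
/-- The pairing of `m ∈ M` with the primitive ray generators: `m ↦ (⟨m, n(ρ)⟩)_ρ`. -/
def rayPair {nM d : ℕ} (v : Fin d → Fin nM → ℤ) (m : Fin nM → ℤ) : Fin d → ℤ :=
  fun ρ => ∑ j, m j * v ρ j

/-- Let `E` be an equivariant reflexive sheaf on an affine toric variety `U_σ` (with `σ`
full dimensional, with rays `σ(1)` and primitive generators `n(ρ)` encoded by `v`), given
by full filtrations `E^ρ(i)` of a finite-dimensional vector space `V`, with
`E^σ_m = ⋂_ρ E^ρ(⟨m, n(ρ)⟩)`, and let `A(m)_ρ = min{i : E^σ_m ⊆ E^ρ(i)}`.  Then for all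
`m, m' ∈ M`:  `E^σ_m ⊆ E^σ_{m'}` iff `A(m) ≤ A(m')` componentwise, and
`E^σ_m = E^σ_{m'}` iff `A(m) = A(m')`. -/
theorem reflexive_anchor_characterizes_inclusion (k : Type) [Field k]
    (V : Type) [AddCommGroup V] [Module k V] [FiniteDimensional k V]
    {nM d : ℕ} (v : Fin d → Fin nM → ℤ)
    (hinj : Function.Injective (rayPair v))
    (Eρ : Fin d → ℤ → Submodule k V)
    (hmono : ∀ ρ, Monotone (Eρ ρ))
    (hfull : ∀ ρ, (∃ i, Eρ ρ i = ⊥) ∧ (∃ i, Eρ ρ i = ⊤))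
    (Eσ : (Fin nM → ℤ) → Submodule k V)
    (hEσ : ∀ m, Eσ m = ⨅ ρ : Fin d, Eρ ρ (rayPair v m ρ))
    (A : (Fin nM → ℤ) → (Fin d → ℤ))
    (hA : ∀ m ρ, IsLeast {i : ℤ | Eσ m ≤ Eρ ρ i} (A m ρ)) :
    ∀ m m' : Fin nM → ℤ,
      (Eσ m ≤ Eσ m' ↔ A m ≤ A m') ∧ (Eσ m = Eσ m' ↔ A m = A m') := by
  have key : ∀ m, Eσ m = ⨅ ρ : Fin d, Eρ ρ (A m ρ) := by
    intro m
    apply le_antisymm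
    · exact le_iInf fun ρ => (hA m ρ).1
    · rw [hEσ m]
      exact iInf_mono fun ρ => hmono ρ ((hA m ρ).2 (by simpa using (hEσ m).le.trans (iInf_le _ ρ)))
  have fwd : ∀ m m', Eσ m ≤ Eσ m' → A m ≤ A m' := fun m m' h ρ =>
    (hA m ρ).2 (h.trans (hA m' ρ).1)
  have bwd : ∀ m m', A m ≤ A m' → Eσ m ≤ Eσ m' := fun m m' h => by
    rw [key m, key m']
    exact iInf_mono fun ρ => hmono ρ (h ρ)
  intro m m'
  refine ⟨⟨fwd m m', bwd m m'⟩, ⟨fun h => le_antisymm (fwd m m' h.le) (fwd m' m h.ge),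
    fun h => le_antisymm (bwd m m' h.le) (bwd m' m h.ge)⟩⟩
end
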